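/- Let a ∈ A and let i, j ∈ N with i ≠ j, and suppose m := m_{i,j;a} is finite. Then the alternating word of length m in the letters i, j whose rightmost letter is i, taken at a, has the same target and the same σ-composite as the alternating word of length m in i, j whose rightmost letter is j, taken at a. (Consequently the assignment e_a ↦ ι_a P_a, s_{i,a} ↦ ι_{i▷a} σ_{i,a} P_a defines a representation of the associated Coxeter groupoid on ⊕_{a∈A} V₀.) -/

import Mathlib

open Pointwise

variable {N : Type*} {A : Type*}

/-- The element `(i j)^m ▷ a` for the action of `F₂(N)` on `A`. -/
def altIter (act : N → A → A) (i j : N) (a : A) : ℕ → A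
  | 0 => a
  | m + 1 => act i (act j (altIter act i j a m))

/-- The set `Θ(i,j;a)`. -/
def ThetaSet (act : N → A → A) (i j : N) (a : A) : Set A :=
  {x | ∃ m : ℕ, x = altIter act i j a m ∨ x = altIter act j i a m}

/-- The set of `ℕ₀`-linear combinations of elements of `s`. -/
def NSpan (s : Set (N →₀ ℝ)) : Set (N →₀ ℝ) :=
  (AddSubmonoid.closure s : Set (N →₀ ℝ))

/-- A generalized root system: a transitive action of `F₂(N)` on `A` (axiom (1)),
roots `root a ⊆ ℝ^{(N)}` with simple roots `α n a` forming a basis (axiom (2)),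
and maps `σ i a ∈ GL(ℝ^{(N)})`, satisfying axioms (3)-(7). -/
structure GRS (N : Type*) (A : Type*) where
  act : N → A → A
  act_invol : ∀ n a, act n (act n a) = a
  act_trans : ∀ a b : A, ∃ l : List N, l.foldr act a = b
  root : A → Set (N →₀ ℝ)
  α : N → A → N →₀ ℝ
  α_mem : ∀ n a, α n a ∈ root a
  α_indep : ∀ a, LinearIndependent ℝ fun n => α n a
  α_span : ∀ a, Submodule.span ℝ (Set.range fun n => α n a) = ⊤
  σ : N → A → (N →₀ ℝ) ≃ₗ[ℝ] (N →₀ ℝ)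
  ax3 : ∀ a, root a =
    root a ∩ NSpan (Set.range fun n => α n a) ∪ -(root a ∩ NSpan (Set.range fun n => α n a))
  ax4 : ∀ i a, (Set.range fun r : ℝ => r • α i a) ∩ root a = {α i a, -α i a}
  ax5_root : ∀ i a, ⇑(σ i a) '' root a = root (act i a)
  ax5_diag : ∀ i a, σ i a (α i a) = -α i (act i a)
  ax5_off : ∀ i a j, j ≠ i →
    ∃ m : ℕ, σ i a (α j a) = α j (act i a) + (m : ℝ) • α i (act i a)
  ax6 : ∀ i a v, σ i (act i a) (σ i a v) = v
  ax7 : ∀ a (i j : N), i ≠ j →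
    (root a ∩ {β | ∃ p q : ℕ, β = (p : ℝ) • α i a + (q : ℝ) • α j a}).Finite →
    (ThetaSet act i j a).Finite ∧
      (ThetaSet act i j a).ncard ∣
        (root a ∩ {β | ∃ p q : ℕ, β = (p : ℝ) • α i a + (q : ℝ) • α j a}).ncard

/-- The positive roots `R⁺_a`. -/
def GRS.pos (G : GRS N A) (a : A) : Set (N →₀ ℝ) :=
  G.root a ∩ NSpan (Set.range fun n => G.α n a)

/-- The target `i₁ ⋯ i_m ▷ a` of the word `(i₁, …, i_m)` at `a`. -/
def GRS.target (G : GRS N A) (l : List N) (a : A) : A :=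
  l.foldr G.act a

/-- The σ-composite `σ_{i₁,b₁} ∘ ⋯ ∘ σ_{i_m,b_m}` of the word `(i₁, …, i_m)` at `a`. -/
noncomputable def GRS.wmap (G : GRS N A) : List N → A → (N →₀ ℝ) ≃ₗ[ℝ] (N →₀ ℝ)
  | [], _ => LinearEquiv.refl ℝ _
  | i :: l, a => (G.wmap l a).trans (G.σ i (G.target l a))

/-- The length `ℓ` of a word at `a`: the minimal length of a word at `a`
with the same target and the same σ-composite. -/
noncomputable def GRS.len (G : GRS N A) (l : List N) (a : A) : ℕ :=
  sInf {m | ∃ l' : List N, l'.length = m ∧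
    G.target l' a = G.target l a ∧ G.wmap l' a = G.wmap l a}

/-- A word of length `m` at `a` is reduced if `ℓ = m`. -/
def GRS.Reduced (G : GRS N A) (l : List N) (a : A) : Prop :=
  G.len l a = l.length

/-- `m_{i,j;a} = |R_a ∩ (ℕ₀ α_{i,a} + ℕ₀ α_{j,a})|`. -/
noncomputable def GRS.mij (G : GRS N A) (i j : N) (a : A) : ℕ :=
  (G.root a ∩ {β | ∃ p q : ℕ, β = (p : ℝ) • G.α i a + (q : ℝ) • G.α j a}).ncard

/-- The alternating word `(i₁, …, i_m)` with `i_k = i` for `k` odd (leftmost letter `i`). -/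
def altList (i j : N) : ℕ → List N
  | 0 => []
  | m + 1 => i :: altList j i m

/-- The alternating word of length `m` in the letters `i,j` whose rightmost letter is `i`. -/
def altR (i j : N) : ℕ → List N
  | 0 => []
  | m + 1 => altR j i m ++ [i]

/-- `a_m = i_m ⋯ i_1 ▷ a` for the alternating sequence with `i_k = i` for odd `k`. -/
def aIter (act : N → A → A) (i j : N) (a : A) : ℕ → A
  | 0 => a
  | m + 1 => act (if m % 2 = 0 then i else j) (aIter act i j a m)

/-- The set of real roots `R^{re}_a`. -/
def GRS.reroot (G : GRS N A) (a : A) : Set (N →₀ ℝ) :=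
  {β | ∃ (b : A) (l : List N) (n : N), G.target l b = a ∧ β = G.wmap l b (G.α n b)}

/-- The word `C(i,j;a)`: alternating of length `m_{i,j;a} - 1` with leftmost letter `i`. -/
noncomputable def GRS.Cword (G : GRS N A) (i j : N) (a : A) : List N :=
  altList i j (G.mij i j a - 1)

/-!
Write `C_b = R_b ∩ (ℕ₀α_i + ℕ₀α_j)`, so that `m = |C_a|`. Each `σ_{i,b}` sends `α_i` to `-α_i`
and `C_b \ {α_i}` bijectively onto `C_{i▷b} \ {α_i}`, and it negates the determinant (`wedge`)
of the `(α_i, α_j)`-coordinates. By induction on `k ≤ m`, the alternating word of length `k` ending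
in `i` makes negative exactly `k` roots of `C_a`, an initial segment for the angular order starting
at `α_i`; for `k = m` it maps `C_a` onto `-C_b`. So does the word ending in `j`, and both words have
the same target `b`, because `m` is a multiple of the period `|Θ(i,j;a)|` of `ij` at `a`
(axiom (7)).

If `W₁, W₂` are the two σ-composites, `W₂⁻¹ W₁` is the σ-composite of an even word in `i, j` from
`a` to `a`, so it preserves `C_a` and the wedge. This forces it to fix `α_i` and `α_j`; for any
other `n` it maps `α_n` to `α_n + δ` and `α_n - δ` to `α_n`, with `δ` in the plane of `α_i, α_j`.
Both `α_n ± δ` are then roots with a positive coordinate, so `δ = 0` by axiom (3).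
-/

lemma mem_altR {i j x : N} {m : ℕ} (h : x ∈ altR i j m) : x = i ∨ x = j := by
  induction m generalizing i j with
  | zero => simp [altR] at h
  | succ m ih =>
    rw [altR, List.mem_append, List.mem_singleton] at h
    exact h.elim (fun h => (ih h).symm) Or.inl

@[simp]
lemma length_altR (i j : N) (m : ℕ) : (altR i j m).length = m := by
  induction m generalizing i j with
  | zero => rfl
  | succ m ih => simp [altR, ih]

lemma prod_map_altR {H : Type*} [Group H] (f : N → H) (hf : ∀ x, f x * f x = 1) (i j : N)
    (m : ℕ) : ((altR i j m).map f).prod = ((altR j i m).map f).prod * (f j * f i) ^ m := by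
  induction m generalizing i j with
  | zero => simp [altR]
  | succ m ih =>
    simp only [altR, List.map_append, List.prod_append, List.map_singleton,
      List.prod_singleton, ih j i]
    rw [mul_assoc, mul_pow_mul, pow_succ', mul_assoc, ← mul_assoc (f j), ← mul_assoc (f j), hf,
      one_mul]

namespace GRS

variable (G : GRS N A) {i j x n : N} {a b : A} {l : List N}

noncomputable def basis (b : A) : Module.Basis N ℝ (N →₀ ℝ) :=
  Module.Basis.mk (G.α_indep b) (G.α_span b).ge

@[simp]
lemma basis_apply (b : A) (n : N) : G.basis b n = G.α n b :=
  Module.Basis.mk_apply _ _ _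

@[simp]
lemma repr_α (b : A) (n : N) : (G.basis b).repr (G.α n b) = Finsupp.single n 1 := by
  rw [← basis_apply, Module.Basis.repr_self]

noncomputable def plane (i j : N) (b : A) : Submodule ℝ (N →₀ ℝ) :=
  Submodule.span ℝ {G.α i b, G.α j b}

noncomputable def wedge (i j : N) (b : A) (u v : N →₀ ℝ) : ℝ :=
  (G.basis b).repr u i * (G.basis b).repr v j - (G.basis b).repr u j * (G.basis b).repr v i

def cone (i j : N) (b : A) : Set (N →₀ ℝ) :=
  G.root b ∩ {β | ∃ p q : ℕ, β = (p : ℝ) • G.α i b + (q : ℝ) • G.α j b}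

lemma plane_comm (i j : N) (b : A) : G.plane i j b = G.plane j i b := by
  rw [plane, plane, Set.pair_comm]

lemma wedge_comm (i j : N) (b : A) (u v : N →₀ ℝ) : G.wedge i j b u v = -G.wedge j i b u v := by
  unfold wedge; ring

lemma cone_comm (i j : N) (b : A) : G.cone i j b = G.cone j i b := by
  ext β
  constructor <;> rintro ⟨hβ, p, q, rfl⟩ <;> exact ⟨hβ, q, p, add_comm _ _⟩

lemma α_mem_plane_left : G.α i b ∈ G.plane i j b :=
  Submodule.subset_span (by simp)

lemma α_mem_plane_right : G.α j b ∈ G.plane i j b :=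
  Submodule.subset_span (by simp)

lemma repr_eq_zero_of_mem_plane {v : N →₀ ℝ} (hv : v ∈ G.plane i j b) (hi : n ≠ i)
    (hj : n ≠ j) : (G.basis b).repr v n = 0 := by
  obtain ⟨p, q, rfl⟩ := Submodule.mem_span_pair.mp hv
  simp [hi.symm, hj.symm]

lemma α_mem_cone_left : G.α i b ∈ G.cone i j b :=
  ⟨G.α_mem i b, 1, 0, by simp⟩

lemma α_mem_cone_right : G.α j b ∈ G.cone i j b :=
  G.cone_comm j i b ▸ G.α_mem_cone_left

lemma cone_subset_plane : G.cone i j b ⊆ G.plane i j b := by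
  rintro - ⟨-, p, q, rfl⟩
  exact Submodule.mem_span_pair.mpr ⟨p, q, rfl⟩

lemma repr_smul_add_smul_left (hij : i ≠ j) (p q : ℝ) :
    (G.basis b).repr (p • G.α i b + q • G.α j b) i = p := by
  simp [hij]

lemma repr_smul_add_smul_right (hij : i ≠ j) (p q : ℝ) :
    (G.basis b).repr (p • G.α i b + q • G.α j b) j = q := by
  simp [hij]

lemma α_left_wedge (hij : i ≠ j) (v : N →₀ ℝ) :
    G.wedge i j b (G.α i b) v = (G.basis b).repr v j := by
  simp [wedge, hij.symm]

lemma wedge_α_left (hij : i ≠ j) (u : N →₀ ℝ) :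
    G.wedge i j b u (G.α i b) = -(G.basis b).repr u j := by
  simp [wedge, hij.symm]

lemma wedge_α_right (hij : i ≠ j) (u : N →₀ ℝ) :
    G.wedge i j b u (G.α j b) = (G.basis b).repr u i := by
  simp [wedge, hij]

lemma repr_nonneg_of_mem_cone {β : N →₀ ℝ} (hβ : β ∈ G.cone i j b) (n : N) :
    0 ≤ (G.basis b).repr β n := by
  classical
  obtain ⟨-, p, q, rfl⟩ := hβ
  simp only [map_add, map_smul, repr_α, Finsupp.add_apply, Finsupp.smul_apply,
    Finsupp.single_apply, smul_eq_mul]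
  split_ifs <;> positivity

lemma repr_nonneg_of_mem_nSpan {v : N →₀ ℝ} (hv : v ∈ NSpan (Set.range fun n => G.α n b))
    (n : N) : 0 ≤ (G.basis b).repr v n := by
  induction hv using AddSubmonoid.closure_induction with
  | mem v hv =>
    obtain ⟨m, rfl⟩ := hv
    simpa using Finsupp.single_nonneg.mpr (zero_le_one (α := ℝ)) n
  | zero => simp
  | add v w _ _ hv hw => simpa using add_nonneg hv hw

lemma repr_nonneg_of_mem_root {β : N →₀ ℝ} (hβ : β ∈ G.root b) {n₀ : N}
    (h₀ : 0 < (G.basis b).repr β n₀) (n : N) : 0 ≤ (G.basis b).repr β n := by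
  rw [G.ax3 b] at hβ
  rcases hβ with ⟨-, hβ⟩ | ⟨-, hβ⟩
  · exact G.repr_nonneg_of_mem_nSpan hβ n
  · have := G.repr_nonneg_of_mem_nSpan hβ n₀
    simp only [map_neg, Finsupp.neg_apply, Left.nonneg_neg_iff] at this
    linarith

lemma neg_α_not_mem_cone (i j : N) (b : A) : -G.α i b ∉ G.cone i j b := fun h => by
  have := G.repr_nonneg_of_mem_cone h i
  norm_num at this

lemma eq_α_of_mem_cone (hij : i ≠ j) {β : N →₀ ℝ} (hβ : β ∈ G.cone i j b)
    (hj : (G.basis b).repr β j = 0) : β = G.α i b := by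
  obtain ⟨hroot, p, q, rfl⟩ := id hβ
  rw [G.repr_smul_add_smul_right hij, Nat.cast_eq_zero] at hj
  subst hj
  rw [Nat.cast_zero, zero_smul, add_zero] at hβ hroot ⊢
  have hline : (p : ℝ) • G.α i b ∈ (Set.range fun r : ℝ => r • G.α i b) ∩ G.root b :=
    ⟨⟨p, rfl⟩, hroot⟩
  rw [G.ax4 i b] at hline
  exact hline.resolve_right fun h => G.neg_α_not_mem_cone i j b (h ▸ hβ)

lemma eq_zero_of_α_add_mem_root_of_α_sub_mem_root {δ : N →₀ ℝ}
    (hδ : (G.basis b).repr δ n = 0) (hadd : G.α n b + δ ∈ G.root b)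
    (hsub : G.α n b - δ ∈ G.root b) : δ = 0 := by
  refine (G.basis b).repr.injective (Finsupp.ext fun m => ?_)
  have h₁ := G.repr_nonneg_of_mem_root hadd (n₀ := n) (by simp [hδ]) m
  have h₂ := G.repr_nonneg_of_mem_root hsub (n₀ := n) (by simp [hδ]) m
  rcases eq_or_ne m n with rfl | hmn
  · simpa using hδ
  · have hα : (G.basis b).repr (G.α n b) m = 0 := by simp [hmn.symm]
    simp only [map_add, map_sub, Finsupp.add_apply, Finsupp.sub_apply, hα] at h₁ h₂
    simp only [map_zero, Finsupp.zero_apply]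
    linarith

lemma σ_act_eq_symm (i : N) (b : A) : G.σ i (G.act i b) = (G.σ i b).symm := by
  refine LinearEquiv.ext fun v => ?_
  obtain ⟨w, rfl⟩ := (G.σ i b).surjective v
  rw [G.ax6, LinearEquiv.symm_apply_apply]

lemma σ_α_sub_mem_plane (hx : x = i ∨ x = j) (b : A) (n : N) :
    G.σ x b (G.α n b) - G.α n (G.act x b) ∈ G.plane i j (G.act x b) := by
  have hαx : G.α x (G.act x b) ∈ G.plane i j (G.act x b) := by
    rcases hx with rfl | rfl
    exacts [G.α_mem_plane_left, G.α_mem_plane_right]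
  rcases eq_or_ne n x with rfl | hnx
  · rw [G.ax5_diag, ← neg_add']
    exact neg_mem (add_mem hαx hαx)
  · obtain ⟨c, hc⟩ := G.ax5_off x b n hnx
    rw [hc, add_sub_cancel_left]
    exact Submodule.smul_mem _ _ hαx

lemma σ_mem_plane (hx : x = i ∨ x = j) {u : N →₀ ℝ} (hu : u ∈ G.plane i j b) :
    G.σ x b u ∈ G.plane i j (G.act x b) := by
  have hα : ∀ n, G.α n (G.act x b) ∈ G.plane i j (G.act x b) →
      G.σ x b (G.α n b) ∈ G.plane i j (G.act x b) := fun n hn => by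
    simpa using add_mem (G.σ_α_sub_mem_plane hx b n) hn
  obtain ⟨p, q, rfl⟩ := Submodule.mem_span_pair.mp hu
  rw [map_add, map_smul, map_smul]
  exact add_mem (Submodule.smul_mem _ _ (hα i G.α_mem_plane_left))
    (Submodule.smul_mem _ _ (hα j G.α_mem_plane_right))

lemma σ_smul_add_smul {c : ℕ}
    (hc : G.σ i b (G.α j b) = G.α j (G.act i b) + (c : ℝ) • G.α i (G.act i b)) (p q : ℝ) :
    G.σ i b (p • G.α i b + q • G.α j b) =
      (q * c - p) • G.α i (G.act i b) + q • G.α j (G.act i b) := by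
  rw [map_add, map_smul, map_smul, G.ax5_diag, hc]
  module

lemma wedge_σ_left (hij : i ≠ j) {u v : N →₀ ℝ} (hu : u ∈ G.plane i j b)
    (hv : v ∈ G.plane i j b) :
    G.wedge i j (G.act i b) (G.σ i b u) (G.σ i b v) = -G.wedge i j b u v := by
  obtain ⟨c, hc⟩ := G.ax5_off i b j hij.symm
  obtain ⟨p, q, rfl⟩ := Submodule.mem_span_pair.mp hu
  obtain ⟨p', q', rfl⟩ := Submodule.mem_span_pair.mp hv
  simp only [wedge, G.σ_smul_add_smul hc, G.repr_smul_add_smul_left hij,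
    G.repr_smul_add_smul_right hij]
  ring

lemma wedge_σ (hij : i ≠ j) (hx : x = i ∨ x = j) {u v : N →₀ ℝ} (hu : u ∈ G.plane i j b)
    (hv : v ∈ G.plane i j b) :
    G.wedge i j (G.act x b) (G.σ x b u) (G.σ x b v) = -G.wedge i j b u v := by
  rcases hx with rfl | rfl
  · exact G.wedge_σ_left hij hu hv
  · rw [G.plane_comm] at hu hv
    rw [G.wedge_comm, G.wedge_σ_left hij.symm hu hv, G.wedge_comm x, neg_neg]

lemma σ_mem_cone (hij : i ≠ j) {β : N →₀ ℝ} (hβ : β ∈ G.cone i j b) (hne : β ≠ G.α i b) :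
    G.σ i b β ∈ G.cone i j (G.act i b) := by
  obtain ⟨c, hc⟩ := G.ax5_off i b j hij.symm
  have hβj : (G.basis b).repr β j ≠ 0 := fun h => hne (G.eq_α_of_mem_cone hij hβ h)
  obtain ⟨hroot, p, q, rfl⟩ := hβ
  have hσ := G.σ_smul_add_smul hc (p : ℝ) q
  have hroot' : G.σ i b ((p : ℝ) • G.α i b + (q : ℝ) • G.α j b) ∈ G.root (G.act i b) :=
    G.ax5_root i b ▸ Set.mem_image_of_mem _ hroot
  have hpq : (p : ℝ) ≤ q * c := by
    rw [G.repr_smul_add_smul_right hij] at hβj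
    have hq : (0 : ℝ) < q := lt_of_le_of_ne q.cast_nonneg (Ne.symm hβj)
    have := G.repr_nonneg_of_mem_root hroot' (n₀ := j)
      (by rwa [hσ, G.repr_smul_add_smul_right hij]) i
    rw [hσ, G.repr_smul_add_smul_left hij] at this
    linarith
  refine ⟨hroot', q * c - p, q, ?_⟩
  rw [hσ, Nat.cast_sub (by exact_mod_cast hpq)]
  push_cast
  rfl

lemma image_σ_cone_diff (hij : i ≠ j) :
    G.σ i b '' (G.cone i j b \ {G.α i b}) = G.cone i j (G.act i b) \ {G.α i (G.act i b)} := by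
  apply Set.Subset.antisymm
  · rintro - ⟨β, ⟨hβ, hne⟩, rfl⟩
    refine ⟨G.σ_mem_cone hij hβ hne, fun h => G.neg_α_not_mem_cone i j b ?_⟩
    rw [Set.mem_singleton_iff, ← neg_neg (G.α i _), ← G.ax5_diag, ← map_neg,
      (G.σ i b).injective.eq_iff] at h
    exact h ▸ hβ
  · rintro γ ⟨hγ, hne⟩
    have hσγ := G.σ_mem_cone hij hγ hne
    rw [G.act_invol, G.σ_act_eq_symm] at hσγ
    refine ⟨(G.σ i b).symm γ, ⟨hσγ, fun h => G.neg_α_not_mem_cone i j (G.act i b) ?_⟩, by simp⟩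
    rw [Set.mem_singleton_iff, LinearEquiv.symm_apply_eq, G.ax5_diag] at h
    exact h ▸ hγ

lemma encard_cone_act_left (hij : i ≠ j) :
    (G.cone i j (G.act i b)).encard = (G.cone i j b).encard := by
  rw [← Set.encard_sdiff_singleton_add_one G.α_mem_cone_left, ← G.image_σ_cone_diff hij,
    (G.σ i b).injective.encard_image, Set.encard_sdiff_singleton_add_one G.α_mem_cone_left]

lemma encard_cone_act (hij : i ≠ j) (hx : x = i ∨ x = j) :
    (G.cone i j (G.act x b)).encard = (G.cone i j b).encard := by
  rcases hx with rfl | rfl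
  · exact G.encard_cone_act_left hij
  · rw [G.cone_comm i x, G.cone_comm i x]
    exact G.encard_cone_act_left hij.symm

@[simp]
lemma target_nil (a : A) : G.target [] a = a := rfl

@[simp]
lemma target_cons (x : N) (l : List N) (a : A) :
    G.target (x :: l) a = G.act x (G.target l a) := rfl

@[simp]
lemma wmap_nil (a : A) : G.wmap [] a = LinearEquiv.refl ℝ _ := rfl

@[simp]
lemma wmap_cons (x : N) (l : List N) (a : A) :
    G.wmap (x :: l) a = (G.wmap l a).trans (G.σ x (G.target l a)) := rfl

lemma target_append (l₁ l₂ : List N) (a : A) :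
    G.target (l₁ ++ l₂) a = G.target l₁ (G.target l₂ a) :=
  List.foldr_append

lemma wmap_append (l₁ l₂ : List N) (a : A) :
    G.wmap (l₁ ++ l₂) a = (G.wmap l₂ a).trans (G.wmap l₁ (G.target l₂ a)) := by
  induction l₁ with
  | nil => rfl
  | cons x l ih => rw [List.cons_append, wmap_cons, ih, target_append]; rfl

lemma target_reverse (l : List N) (a : A) : G.target l.reverse (G.target l a) = a := by
  induction l with
  | nil => rfl
  | cons x l ih => simp [target_append, G.act_invol, ih]

lemma wmap_reverse (l : List N) (a : A) :
    G.wmap l.reverse (G.target l a) = (G.wmap l a).symm := by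
  induction l with
  | nil => rfl
  | cons x l ih =>
    simp only [List.reverse_cons, wmap_append, target_cons, wmap_cons, wmap_nil, target_nil,
      G.act_invol, ih, G.σ_act_eq_symm]
    ext v
    rfl

lemma image_wmap_root (l : List N) (a : A) :
    G.wmap l a '' G.root a = G.root (G.target l a) := by
  induction l with
  | nil => exact Set.image_id _
  | cons x l ih => rw [wmap_cons, target_cons, ← G.ax5_root, ← ih, ← Set.image_comp]; rfl

lemma wmap_mem_plane (hl : ∀ x ∈ l, x = i ∨ x = j) {u : N →₀ ℝ} (hu : u ∈ G.plane i j a) :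
    G.wmap l a u ∈ G.plane i j (G.target l a) := by
  induction l with
  | nil => exact hu
  | cons x l ih =>
    obtain ⟨hx, hl⟩ := List.forall_mem_cons.mp hl
    exact G.σ_mem_plane hx (ih hl)

lemma wedge_wmap (hij : i ≠ j) (hl : ∀ x ∈ l, x = i ∨ x = j) {u v : N →₀ ℝ}
    (hu : u ∈ G.plane i j a) (hv : v ∈ G.plane i j a) :
    G.wedge i j (G.target l a) (G.wmap l a u) (G.wmap l a v) =
      (-1) ^ l.length * G.wedge i j a u v := by
  induction l with
  | nil => simp
  | cons x l ih =>
    obtain ⟨hx, hl⟩ := List.forall_mem_cons.mp hl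
    rw [wmap_cons, LinearEquiv.trans_apply, LinearEquiv.trans_apply, target_cons,
      G.wedge_σ hij hx (G.wmap_mem_plane hl hu) (G.wmap_mem_plane hl hv), ih hl,
      List.length_cons, pow_succ]
    ring

lemma wmap_α_sub_mem_plane (hl : ∀ x ∈ l, x = i ∨ x = j) (n : N) :
    G.wmap l a (G.α n a) - G.α n (G.target l a) ∈ G.plane i j (G.target l a) := by
  induction l with
  | nil => simp
  | cons x l ih =>
    obtain ⟨hx, hl⟩ := List.forall_mem_cons.mp hl
    have h := add_mem (G.σ_mem_plane hx (ih hl)) (G.σ_α_sub_mem_plane hx (G.target l a) n)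
    rw [map_sub, sub_add_sub_cancel] at h
    exact h

lemma encard_cone_target (hij : i ≠ j) (hl : ∀ x ∈ l, x = i ∨ x = j) :
    (G.cone i j (G.target l a)).encard = (G.cone i j a).encard := by
  induction l with
  | nil => rfl
  | cons x l ih =>
    obtain ⟨hx, hl⟩ := List.forall_mem_cons.mp hl
    rw [target_cons, G.encard_cone_act hij hx, ih hl]

lemma target_altR_succ (k : ℕ) :
    G.target (altR i j (k + 1)) a = G.target (altR j i k) (G.act i a) :=
  G.target_append _ _ _

lemma wmap_altR_succ (k : ℕ) :
    G.wmap (altR i j (k + 1)) a = (G.σ i a).trans (G.wmap (altR j i k) (G.act i a)) := by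
  rw [altR, wmap_append]
  rfl

def perm (x : N) : Equiv.Perm A :=
  Function.Involutive.toPerm (G.act x) (G.act_invol x)

@[simp]
lemma perm_apply (x : N) (b : A) : G.perm x b = G.act x b := rfl

lemma perm_mul_self (x : N) : G.perm x * G.perm x = 1 :=
  Equiv.ext (G.act_invol x)

lemma target_eq_prod (l : List N) (a : A) : G.target l a = (l.map G.perm).prod a := by
  induction l with
  | nil => rfl
  | cons x l ih => simp [ih]

lemma altIter_eq_pow (i j : N) (a : A) (m : ℕ) :
    altIter G.act i j a m = ((G.perm i * G.perm j) ^ m) a := by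
  induction m with
  | zero => rfl
  | succ m ih => simp [altIter, ih, pow_succ']

lemma thetaSet_eq_orbit :
    ThetaSet G.act i j a = MulAction.orbit (Subgroup.zpowers (G.perm i * G.perm j)) a := by
  have hji (m : ℕ) : altIter G.act j i a m = ((G.perm i * G.perm j) ^ (-(m : ℤ))) a := by
    rw [altIter_eq_pow, zpow_neg, zpow_natCast, ← inv_pow, mul_inv_rev,
      inv_eq_of_mul_eq_one_right (G.perm_mul_self i),
      inv_eq_of_mul_eq_one_right (G.perm_mul_self j)]
  ext x
  simp only [ThetaSet, Set.mem_ofPred_eq, MulAction.mem_orbit_iff, Subgroup.exists_zpowers,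
    G.altIter_eq_pow i j, hji, ← zpow_natCast]
  constructor
  · rintro ⟨m, rfl | rfl⟩
    exacts [⟨m, rfl⟩, ⟨-m, rfl⟩]
  · rintro ⟨k, rfl⟩
    obtain ⟨m, rfl | rfl⟩ := Int.eq_nat_or_neg k
    exacts [⟨m, Or.inl rfl⟩, ⟨m, Or.inr rfl⟩]

lemma ncard_thetaSet :
    (ThetaSet G.act i j a).ncard = Function.minimalPeriod ((G.perm i * G.perm j) • ·) a := by
  rw [thetaSet_eq_orbit, ← Nat.card_coe_set_eq,
    Nat.card_congr (MulAction.orbitZPowersEquiv _ a), Nat.card_zmod]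

theorem target_altR_eq {m : ℕ} (hdvd : (ThetaSet G.act i j a).ncard ∣ m) :
    G.target (altR i j m) a = G.target (altR j i m) a := by
  have hfix : ((G.perm i * G.perm j) ^ m) a = a := by
    rw [← Equiv.Perm.smul_def, MulAction.pow_smul_eq_iff_minimalPeriod_dvd, ← G.ncard_thetaSet]
    exact hdvd
  rw [G.target_eq_prod, G.target_eq_prod, prod_map_altR G.perm G.perm_mul_self j i,
    Equiv.Perm.mul_apply, hfix]

/-- `T` is an initial segment of `C(i,j;b)` for the angular order that starts at `α_i`. -/
def IsInitialSegment (i j : N) (b : A) (T : Set (N →₀ ℝ)) : Prop :=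
  ∀ u ∈ G.cone i j b, ∀ v ∈ T, 0 ≤ G.wedge i j b u v → u ∈ T

lemma α_not_mem_of_isInitialSegment (hij : i ≠ j) {T : Set (N →₀ ℝ)}
    (hT : G.IsInitialSegment i j b T) (hlt : T.encard < (G.cone i j b).encard) :
    G.α j b ∉ T := fun hα => by
  refine hlt.not_ge (Set.encard_le_encard fun u hu => hT u hu _ hα ?_)
  exact (G.wedge_α_right hij u).symm ▸ G.repr_nonneg_of_mem_cone hu i

section Step

variable {T' : Set (N →₀ ℝ)}

lemma symm_image_subset_cone_diff (hij : i ≠ j) (hsub : T' ⊆ G.cone j i (G.act i a))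
    (hα : G.α i (G.act i a) ∉ T') :
    (G.σ i a).symm '' T' ⊆ G.cone i j a \ {G.α i a} := by
  rintro - ⟨γ, hγ, rfl⟩
  have hγ' : γ ∈ G.cone i j (G.act i a) \ {G.α i (G.act i a)} :=
    ⟨G.cone_comm i j _ ▸ hsub hγ, fun h => hα (h ▸ hγ)⟩
  rw [← G.image_σ_cone_diff hij] at hγ'
  obtain ⟨β, hβ, rfl⟩ := hγ'
  simpa using hβ

lemma insert_symm_image_subset_cone (hij : i ≠ j) (hsub : T' ⊆ G.cone j i (G.act i a))
    (hα : G.α i (G.act i a) ∉ T') :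
    insert (G.α i a) ((G.σ i a).symm '' T') ⊆ G.cone i j a :=
  Set.insert_subset G.α_mem_cone_left
    ((G.symm_image_subset_cone_diff hij hsub hα).trans Set.sdiff_subset)

lemma encard_insert_symm_image (hij : i ≠ j) (hsub : T' ⊆ G.cone j i (G.act i a))
    (hα : G.α i (G.act i a) ∉ T') :
    (insert (G.α i a) ((G.σ i a).symm '' T')).encard = T'.encard + 1 := by
  rw [Set.encard_insert_of_notMem fun h => (G.symm_image_subset_cone_diff hij hsub hα h).2 rfl,
    (G.σ i a).symm.injective.encard_image]

lemma isInitialSegment_insert_symm_image (hij : i ≠ j) (hsub : T' ⊆ G.cone j i (G.act i a))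
    (hα : G.α i (G.act i a) ∉ T') (hT' : G.IsInitialSegment j i (G.act i a) T') :
    G.IsInitialSegment i j a (insert (G.α i a) ((G.σ i a).symm '' T')) := by
  rintro u hu v hv huv
  by_cases hui : u = G.α i a
  · exact hui ▸ Set.mem_insert _ _
  right
  rcases hv with rfl | ⟨γ, hγ, rfl⟩
  · refine absurd (G.eq_α_of_mem_cone hij hu (le_antisymm ?_ (G.repr_nonneg_of_mem_cone hu j)))
      hui
    rw [G.wedge_α_left hij] at huv
    linarith
  · have hσu : G.σ i a u ∈ G.cone j i (G.act i a) :=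
      G.cone_comm i j _ ▸ G.σ_mem_cone hij hu hui
    have hv := (G.symm_image_subset_cone_diff hij hsub hα ⟨γ, hγ, rfl⟩).1
    have hflip := G.wedge_σ hij (Or.inl rfl) (G.cone_subset_plane hu) (G.cone_subset_plane hv)
    rw [LinearEquiv.apply_symm_apply, G.wedge_comm] at hflip
    exact ⟨G.σ i a u, hT' _ hσu γ hγ (by linarith), by simp⟩

lemma mapsTo_insert_symm_image (hij : i ≠ j) (hα : G.α i (G.act i a) ∉ T')
    {W : (N →₀ ℝ) ≃ₗ[ℝ] (N →₀ ℝ)} {C : Set (N →₀ ℝ)} (hneg : Set.MapsTo W T' (-C))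
    (hpos : Set.MapsTo W (G.cone j i (G.act i a) \ T') C) :
    Set.MapsTo ((G.σ i a).trans W) (insert (G.α i a) ((G.σ i a).symm '' T')) (-C) ∧
      Set.MapsTo ((G.σ i a).trans W) (G.cone i j a \ insert (G.α i a) ((G.σ i a).symm '' T'))
        C := by
  refine ⟨?_, ?_⟩
  · rintro - (rfl | ⟨γ, hγ, rfl⟩)
    · simpa [G.ax5_diag] using hpos ⟨G.α_mem_cone_right, hα⟩
    · simpa using hneg hγ
  · rintro β ⟨hβ, hβT⟩
    have hne : β ≠ G.α i a := fun h => hβT (h ▸ Set.mem_insert _ _)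
    exact hpos ⟨G.cone_comm i j _ ▸ G.σ_mem_cone hij hβ hne,
      fun h => hβT (Or.inr ⟨_, h, by simp⟩)⟩

end Step

theorem exists_isInitialSegment_wmap_altR (k : ℕ) (hij : i ≠ j)
    (hk : (k : ℕ∞) ≤ (G.cone i j a).encard) :
    ∃ T ⊆ G.cone i j a, T.encard = k ∧ G.IsInitialSegment i j a T ∧
      Set.MapsTo (G.wmap (altR i j k) a) T (-G.cone i j (G.target (altR i j k) a)) ∧
      Set.MapsTo (G.wmap (altR i j k) a) (G.cone i j a \ T)
        (G.cone i j (G.target (altR i j k) a)) := by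
  induction k generalizing a i j with
  | zero =>
    exact ⟨∅, Set.empty_subset _, by simp, fun _ _ _ h => h.elim, Set.mapsTo_empty _ _,
      fun β hβ => hβ.1⟩
  | succ k ih =>
    have hE : (G.cone j i (G.act i a)).encard = (G.cone i j a).encard := by
      rw [G.cone_comm j i, G.encard_cone_act hij (Or.inl rfl)]
    have hlt : (k : ℕ∞) < (G.cone i j a).encard :=
      lt_of_lt_of_le (by exact_mod_cast k.lt_succ_self) hk
    obtain ⟨T', hsub, hcard, hinit, hneg, hpos⟩ := ih hij.symm (hE ▸ hlt.le)
    have hα := G.α_not_mem_of_isInitialSegment hij.symm hinit (by rwa [hcard, hE])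
    rw [G.target_altR_succ, G.wmap_altR_succ, G.cone_comm i j (G.target _ _)]
    refine ⟨insert (G.α i a) ((G.σ i a).symm '' T'),
      G.insert_symm_image_subset_cone hij hsub hα, ?_,
      G.isInitialSegment_insert_symm_image hij hsub hα hinit,
      G.mapsTo_insert_symm_image hij hα hneg hpos⟩
    rw [G.encard_insert_symm_image hij hsub hα, hcard]
    norm_cast

theorem image_wmap_altR_cone (hij : i ≠ j) (hfin : (G.cone i j a).Finite) :
    G.wmap (altR i j (G.cone i j a).ncard) a '' G.cone i j a =
      -G.cone i j (G.target (altR i j (G.cone i j a).ncard) a) := by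
  have hm : ((G.cone i j a).ncard : ℕ∞) = (G.cone i j a).encard := hfin.cast_ncard_eq
  obtain ⟨T, hsub, hcard, -, hneg, -⟩ := G.exists_isInitialSegment_wmap_altR _ hij hm.le
  obtain rfl : T = G.cone i j a :=
    (hfin.subset hsub).eq_of_subset_of_encard_le hsub (by rw [hcard, hm])
  refine (hfin.image _).eq_of_subset_of_encard_le hneg.image_subset ?_
  rw [Set.encard_neg, G.encard_cone_target hij fun x => mem_altR,
    (G.wmap _ a).injective.encard_image]

lemma apply_α_eq_of_image_cone (hij : i ≠ j) {f : (N →₀ ℝ) → (N →₀ ℝ)}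
    (hf : f '' G.cone i j a = G.cone i j a)
    (hwedge : ∀ u ∈ G.cone i j a, ∀ v ∈ G.cone i j a,
      G.wedge i j a (f u) (f v) = G.wedge i j a u v) :
    f (G.α i a) = G.α i a := by
  have hz : f (G.α i a) ∈ G.cone i j a := hf ▸ Set.mem_image_of_mem f G.α_mem_cone_left
  obtain ⟨β, hβ, hfβ⟩ : G.α i a ∈ f '' G.cone i j a := hf.symm ▸ G.α_mem_cone_left
  -- `wedge (α_i, β) = β_j` equals `wedge (f α_i, α_i) = -(f α_i)_j`, and both coordinates are `≥ 0`.
  have key := hwedge _ G.α_mem_cone_left β hβ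
  rw [hfβ, G.wedge_α_left hij, G.α_left_wedge hij] at key
  refine G.eq_α_of_mem_cone hij hz (le_antisymm ?_ (G.repr_nonneg_of_mem_cone hz j))
  linarith [G.repr_nonneg_of_mem_cone hβ j]

lemma apply_α_eq_of_fixes_plane (hi : n ≠ i) (hj : n ≠ j) (f : (N →₀ ℝ) ≃ₗ[ℝ] (N →₀ ℝ))
    (hroot : f '' G.root a = G.root a) (hfix : ∀ v ∈ G.plane i j a, f v = v)
    (hsub : f (G.α n a) - G.α n a ∈ G.plane i j a) : f (G.α n a) = G.α n a := by
  set δ := f (G.α n a) - G.α n a with hδ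
  obtain ⟨r, hr, hfr⟩ : G.α n a ∈ f '' G.root a := hroot.symm ▸ G.α_mem n a
  have hr' : r = G.α n a - δ := f.injective (by rw [hfr, map_sub, hfix δ hsub, hδ]; abel)
  have hadd : G.α n a + δ ∈ G.root a := by
    rw [hδ, add_sub_cancel]
    exact hroot ▸ Set.mem_image_of_mem f (G.α_mem n a)
  exact sub_eq_zero.mp <| G.eq_zero_of_α_add_mem_root_of_α_sub_mem_root
    (G.repr_eq_zero_of_mem_plane hsub hi hj) hadd (hr' ▸ hr)

lemma wmap_apply_α_eq_of_image_cone (hij : i ≠ j) (hl : ∀ x ∈ l, x = i ∨ x = j)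
    (hlen : Even l.length) (ht : G.target l a = a)
    (hC : G.wmap l a '' G.cone i j a = G.cone i j a) :
    G.wmap l a (G.α i a) = G.α i a := by
  refine G.apply_α_eq_of_image_cone hij hC fun u hu v hv => ?_
  have h := G.wedge_wmap hij hl (G.cone_subset_plane hu) (G.cone_subset_plane hv)
  rwa [ht, hlen.neg_one_pow, one_mul] at h

theorem wmap_eq_refl_of_image_cone (hij : i ≠ j) (hl : ∀ x ∈ l, x = i ∨ x = j)
    (hlen : Even l.length) (ht : G.target l a = a)
    (hC : G.wmap l a '' G.cone i j a = G.cone i j a) :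
    G.wmap l a = LinearEquiv.refl ℝ _ := by
  have hi := G.wmap_apply_α_eq_of_image_cone hij hl hlen ht hC
  have hj := G.wmap_apply_α_eq_of_image_cone hij.symm (fun x hx => (hl x hx).symm) hlen ht
    (G.cone_comm i j a ▸ hC)
  have hfix : ∀ v ∈ G.plane i j a, G.wmap l a v = v := fun v hv => by
    obtain ⟨p, q, rfl⟩ := Submodule.mem_span_pair.mp hv
    simp [hi, hj]
  refine (G.basis a).ext' fun n => ?_
  rw [basis_apply, LinearEquiv.refl_apply]
  by_cases hni : n = i
  · exact hni ▸ hi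
  by_cases hnj : n = j
  · exact hnj ▸ hj
  have hroot := G.image_wmap_root l a
  have hsub := G.wmap_α_sub_mem_plane hl (a := a) n
  rw [ht] at hroot hsub
  exact G.apply_α_eq_of_fixes_plane hni hnj _ hroot hfix hsub

theorem wmap_eq_of_image_cone_eq {l₁ l₂ : List N} (hij : i ≠ j) (hl₁ : ∀ x ∈ l₁, x = i ∨ x = j)
    (hl₂ : ∀ x ∈ l₂, x = i ∨ x = j) (hlen : l₁.length = l₂.length)
    (ht : G.target l₁ a = G.target l₂ a)
    (hC : G.wmap l₁ a '' G.cone i j a = G.wmap l₂ a '' G.cone i j a) :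
    G.wmap l₁ a = G.wmap l₂ a := by
  have hloop : G.wmap (l₂.reverse ++ l₁) a = (G.wmap l₁ a).trans (G.wmap l₂ a).symm := by
    rw [wmap_append, ht, wmap_reverse]
  have hrefl := G.wmap_eq_refl_of_image_cone hij (l := l₂.reverse ++ l₁)
    (fun x hx => (List.mem_append.mp hx).elim (hl₂ x ∘ List.mem_reverse.mp) (hl₁ x))
    (by simp [hlen]) (by rw [target_append, ht, target_reverse])
    (by
      rw [hloop]
      change (G.wmap l₂ a).symm ∘ G.wmap l₁ a '' _ = _
      rw [Set.image_comp, hC]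
      exact (G.wmap l₂ a).toEquiv.symm_image_image _)
  refine LinearEquiv.ext fun v => ?_
  rw [← LinearEquiv.symm_apply_eq]
  exact congrArg (· v) (hloop.symm.trans hrefl)

end GRS

theorem stmt8_general (G : GRS N A) (a : A) (i j : N) (hij : i ≠ j)
    (hfin : (G.root a ∩
      {β | ∃ p q : ℕ, β = (p : ℝ) • G.α i a + (q : ℝ) • G.α j a}).Finite) :
    G.target (altR i j (G.mij i j a)) a = G.target (altR j i (G.mij i j a)) a ∧
    G.wmap (altR i j (G.mij i j a)) a = G.wmap (altR j i (G.mij i j a)) a := by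
  have hcone : (G.cone i j a).Finite := hfin
  have hT : G.target (altR i j (G.cone i j a).ncard) a =
      G.target (altR j i (G.cone i j a).ncard) a :=
    G.target_altR_eq (G.ax7 a i j hij hfin).2
  have hC₁ := G.image_wmap_altR_cone hij hcone
  have hC₂ := G.image_wmap_altR_cone hij.symm (G.cone_comm i j a ▸ hcone)
  simp only [G.cone_comm j i] at hC₂
  rw [← hT] at hC₂
  exact ⟨hT, G.wmap_eq_of_image_cone_eq hij (fun _ => mem_altR) (fun _ h => (mem_altR h).symm)
    (by simp) hT (hC₁.trans hC₂.symm)⟩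

/-- if `m_{i,j;a}` is finite then the two alternating words of length
`m_{i,j;a}` at `a` (rightmost letter `i`, resp. `j`) have the same target and the same
σ-composite (the Coxeter relations hold). -/
theorem stmt8 [Nonempty N] [Nonempty A] (G : GRS N A) (a : A) (i j : N) (hij : i ≠ j)
    (hfin : (G.root a ∩
      {β | ∃ p q : ℕ, β = (p : ℝ) • G.α i a + (q : ℝ) • G.α j a}).Finite) :
    G.target (altR i j (G.mij i j a)) a = G.target (altR j i (G.mij i j a)) a ∧
    G.wmap (altR i j (G.mij i j a)) a = G.wmap (altR j i (G.mij i j a)) a :=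
  stmt8_general G a i j hij hfin
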